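/- For any smooth radial function F and any constants β₁, β₂, β₃, the three functions I₁₂, I₁₂₃ and H = T + U are mutually in involution on D (all pairwise canonical Poisson brackets vanish), and likewise the three functions I₂₃, I₁₂₃ and H are mutually in involution on D. -/

import Mathlib

namespace Paper
noncomputable section

/-- The κ-dependent cosine Cκ(x) = ∑ (−κ)^l x^{2l}/(2l)!. -/
def Ck (κ x : ℝ) : ℝ := ∑' l : ℕ, (-κ) ^ l * x ^ (2 * l) / (Nat.factorial (2 * l) : ℝ)

/-- The κ-dependent sine Sκ(x) = ∑ (−κ)^l x^{2l+1}/(2l+1)!. -/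
def Sk (κ x : ℝ) : ℝ := ∑' l : ℕ, (-κ) ^ l * x ^ (2 * l + 1) / (Nat.factorial (2 * l + 1) : ℝ)

/-- The κ-dependent tangent Tκ(x) = Sκ(x)/Cκ(x). -/
def Tk (κ x : ℝ) : ℝ := Sk κ x / Ck κ x

/-- Phase space ℝ³ × ℝ³ ≃ ℝ⁶ with canonical coordinates
`(r, θ, φ, p_r, p_θ, p_φ) = (x 0, x 1, x 2, x 3, x 4, x 5)`. -/
abbrev Pt := Fin 6 → ℝ

/-- Partial derivative in the i-th coordinate direction. -/
def pd (f : Pt → ℝ) (i : Fin 6) (x : Pt) : ℝ := fderiv ℝ f x (Pi.single i 1)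

/-- Canonical Poisson bracket {f,g} = ∑_{q} (∂f/∂q ∂g/∂p_q − ∂g/∂q ∂f/∂p_q). -/
def pb (f g : Pt → ℝ) (x : Pt) : ℝ :=
  ∑ i : Fin 3,
    (pd f ⟨i.1, by omega⟩ x * pd g ⟨i.1 + 3, by omega⟩ x
      - pd g ⟨i.1, by omega⟩ x * pd f ⟨i.1 + 3, by omega⟩ x)

/-- Gradient of a function on phase space, as a vector in ℝ⁶. -/
def grad (f : Pt → ℝ) (x : Pt) : Fin 6 → ℝ := fun i => pd f i x

/-- The open domain D where Sκ₁(r), Cκ₁(r), Sκ₂(θ), Cκ₂(θ), cos φ, sin φ are nonzero. -/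
def D (κ₁ κ₂ : ℝ) : Set Pt :=
  {x | Sk κ₁ (x 0) ≠ 0 ∧ Ck κ₁ (x 0) ≠ 0 ∧ Sk κ₂ (x 1) ≠ 0 ∧ Ck κ₂ (x 1) ≠ 0 ∧
       Real.cos (x 2) ≠ 0 ∧ Real.sin (x 2) ≠ 0}

/-- J₀₁ = Cκ₂(θ)p_r − (Sκ₂(θ)/Tκ₁(r))p_θ. -/
def J01 (κ₁ κ₂ : ℝ) (x : Pt) : ℝ :=
  Ck κ₂ (x 1) * x 3 - (Sk κ₂ (x 1) / Tk κ₁ (x 0)) * x 4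

/-- J₀₂. -/
def J02 (κ₁ κ₂ : ℝ) (x : Pt) : ℝ :=
  κ₂ * Sk κ₂ (x 1) * Real.cos (x 2) * x 3
    + (Ck κ₂ (x 1) * Real.cos (x 2) / Tk κ₁ (x 0)) * x 4
    - (Real.sin (x 2) / (Tk κ₁ (x 0) * Sk κ₂ (x 1))) * x 5

/-- J₀₃. -/
def J03 (κ₁ κ₂ : ℝ) (x : Pt) : ℝ :=
  κ₂ * Sk κ₂ (x 1) * Real.sin (x 2) * x 3
    + (Ck κ₂ (x 1) * Real.sin (x 2) / Tk κ₁ (x 0)) * x 4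
    + (Real.cos (x 2) / (Tk κ₁ (x 0) * Sk κ₂ (x 1))) * x 5

/-- J₁₂ = cos φ·p_θ − (sin φ/Tκ₂(θ))p_φ. -/
def J12 (κ₂ : ℝ) (x : Pt) : ℝ :=
  Real.cos (x 2) * x 4 - (Real.sin (x 2) / Tk κ₂ (x 1)) * x 5

/-- J₁₃ = sin φ·p_θ + (cos φ/Tκ₂(θ))p_φ. -/
def J13 (κ₂ : ℝ) (x : Pt) : ℝ :=
  Real.sin (x 2) * x 4 + (Real.cos (x 2) / Tk κ₂ (x 1)) * x 5

/-- J₂₃ = p_φ. -/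
def J23 (x : Pt) : ℝ := x 5

/-- Kinetic energy T. -/
def Tkin (κ₁ κ₂ : ℝ) (x : Pt) : ℝ :=
  (1 / 2) * ((x 3) ^ 2 + (x 4) ^ 2 / (κ₂ * Sk κ₁ (x 0) ^ 2)
    + (x 5) ^ 2 / (κ₂ * Sk κ₁ (x 0) ^ 2 * Sk κ₂ (x 1) ^ 2))

/-- The superintegrable potential U with arbitrary radial function F. -/
def U (κ₁ κ₂ : ℝ) (F : ℝ → ℝ) (β₁ β₂ β₃ : ℝ) (x : Pt) : ℝ :=
  F (x 0) + (1 / Sk κ₁ (x 0) ^ 2) *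
    (β₁ / Ck κ₂ (x 1) ^ 2 + β₂ / (Sk κ₂ (x 1) ^ 2 * Real.cos (x 2) ^ 2)
      + β₃ / (Sk κ₂ (x 1) ^ 2 * Real.sin (x 2) ^ 2))

/-- Integral I₁₂. -/
def I12 (κ₂ β₁ β₂ : ℝ) (x : Pt) : ℝ :=
  (Real.cos (x 2) * x 4 - (Real.sin (x 2) / Tk κ₂ (x 1)) * x 5) ^ 2
    + 2 * β₁ * κ₂ ^ 2 * Tk κ₂ (x 1) ^ 2 * Real.cos (x 2) ^ 2
    + 2 * β₂ * κ₂ / (Tk κ₂ (x 1) ^ 2 * Real.cos (x 2) ^ 2)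

/-- Integral I₁₃. -/
def I13 (κ₂ β₁ β₃ : ℝ) (x : Pt) : ℝ :=
  (Real.sin (x 2) * x 4 + (Real.cos (x 2) / Tk κ₂ (x 1)) * x 5) ^ 2
    + 2 * β₁ * κ₂ ^ 2 * Tk κ₂ (x 1) ^ 2 * Real.sin (x 2) ^ 2
    + 2 * β₃ * κ₂ / (Tk κ₂ (x 1) ^ 2 * Real.sin (x 2) ^ 2)

/-- Integral I₂₃. -/
def I23 (κ₂ β₂ β₃ : ℝ) (x : Pt) : ℝ :=
  (x 5) ^ 2 + 2 * β₂ * κ₂ * Real.tan (x 2) ^ 2 + 2 * β₃ * κ₂ / Real.tan (x 2) ^ 2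

/-- Integral I₁₂₃. -/
def I123 (κ₂ β₁ β₂ β₃ : ℝ) (x : Pt) : ℝ :=
  (x 4) ^ 2 + (x 5) ^ 2 / Sk κ₂ (x 1) ^ 2 + 2 * β₁ * κ₂ / Ck κ₂ (x 1) ^ 2
    + 2 * β₂ * κ₂ / (Sk κ₂ (x 1) ^ 2 * Real.cos (x 2) ^ 2)
    + 2 * β₃ * κ₂ / (Sk κ₂ (x 1) ^ 2 * Real.sin (x 2) ^ 2)

/-- The Smorodinsky–Winternitz Hamiltonian H^SW. -/
def HSW (κ₁ κ₂ β₀ β₁ β₂ β₃ : ℝ) (x : Pt) : ℝ :=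
  Tkin κ₁ κ₂ x + β₀ * Tk κ₁ (x 0) ^ 2 + (1 / Sk κ₁ (x 0) ^ 2) *
    (β₁ / Ck κ₂ (x 1) ^ 2 + β₂ / (Sk κ₂ (x 1) ^ 2 * Real.cos (x 2) ^ 2)
      + β₃ / (Sk κ₂ (x 1) ^ 2 * Real.sin (x 2) ^ 2))

/-- Integral I₀₁ of H^SW. -/
def I01 (κ₁ κ₂ β₀ β₁ : ℝ) (x : Pt) : ℝ :=
  J01 κ₁ κ₂ x ^ 2 + 2 * β₀ * Tk κ₁ (x 0) ^ 2 * Ck κ₂ (x 1) ^ 2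
    + 2 * β₁ / (Tk κ₁ (x 0) ^ 2 * Ck κ₂ (x 1) ^ 2)

/-- Integral I₀₂ of H^SW. -/
def I02 (κ₁ κ₂ β₀ β₂ : ℝ) (x : Pt) : ℝ :=
  J02 κ₁ κ₂ x ^ 2 + 2 * β₀ * κ₂ ^ 2 * Tk κ₁ (x 0) ^ 2 * Sk κ₂ (x 1) ^ 2 * Real.cos (x 2) ^ 2
    + 2 * β₂ * κ₂ / (Tk κ₁ (x 0) ^ 2 * Sk κ₂ (x 1) ^ 2 * Real.cos (x 2) ^ 2)

/-- Integral I₀₃ of H^SW. -/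
def I03 (κ₁ κ₂ β₀ β₃ : ℝ) (x : Pt) : ℝ :=
  J03 κ₁ κ₂ x ^ 2 + 2 * β₀ * κ₂ ^ 2 * Tk κ₁ (x 0) ^ 2 * Sk κ₂ (x 1) ^ 2 * Real.sin (x 2) ^ 2
    + 2 * β₃ * κ₂ / (Tk κ₁ (x 0) ^ 2 * Sk κ₂ (x 1) ^ 2 * Real.sin (x 2) ^ 2)

/-- Generalized Kepler–Coulomb Hamiltonian H^GKC₁ = T + U^GKC₁. -/
def HGKC1 (κ₁ κ₂ k β₂ β₃ : ℝ) (x : Pt) : ℝ :=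
  Tkin κ₁ κ₂ x - k / Tk κ₁ (x 0)
    + (1 / (Sk κ₁ (x 0) ^ 2 * Sk κ₂ (x 1) ^ 2)) *
        (β₂ / Real.cos (x 2) ^ 2 + β₃ / Real.sin (x 2) ^ 2)

/-- Generalized Kepler–Coulomb Hamiltonian H^GKC₂ = T + U^GKC₂. -/
def HGKC2 (κ₁ κ₂ k β₁ β₃ : ℝ) (x : Pt) : ℝ :=
  Tkin κ₁ κ₂ x - k / Tk κ₁ (x 0)
    + (1 / Sk κ₁ (x 0) ^ 2) *
        (β₁ / Ck κ₂ (x 1) ^ 2 + β₃ / (Sk κ₂ (x 1) ^ 2 * Real.sin (x 2) ^ 2))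

/-- Generalized Kepler–Coulomb Hamiltonian H^GKC₃ = T + U^GKC₃. -/
def HGKC3 (κ₁ κ₂ k β₁ β₂ : ℝ) (x : Pt) : ℝ :=
  Tkin κ₁ κ₂ x - k / Tk κ₁ (x 0)
    + (1 / Sk κ₁ (x 0) ^ 2) *
        (β₁ / Ck κ₂ (x 1) ^ 2 + β₂ / (Sk κ₂ (x 1) ^ 2 * Real.cos (x 2) ^ 2))

/-- The function L₁. -/
def L1 (κ₁ κ₂ k β₂ β₃ : ℝ) (x : Pt) : ℝ :=
  -(J02 κ₁ κ₂ x * J12 κ₂ x) - J03 κ₁ κ₂ x * J13 κ₂ x + k * κ₂ * Ck κ₂ (x 1)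
    - (2 * κ₂ * Ck κ₂ (x 1) / (Tk κ₁ (x 0) * Sk κ₂ (x 1) ^ 2)) *
        (β₂ / Real.cos (x 2) ^ 2 + β₃ / Real.sin (x 2) ^ 2)

/-- The function L₂. -/
def L2 (κ₁ κ₂ k β₁ β₃ : ℝ) (x : Pt) : ℝ :=
  J01 κ₁ κ₂ x * J12 κ₂ x - J03 κ₁ κ₂ x * J23 x + k * κ₂ * Sk κ₂ (x 1) * Real.cos (x 2)
    - (2 * κ₂ * Real.cos (x 2) / Tk κ₁ (x 0)) *
        (β₁ * Sk κ₂ (x 1) / Ck κ₂ (x 1) ^ 2 + β₃ / (Sk κ₂ (x 1) * Real.sin (x 2) ^ 2))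

/-- The function L₃. -/
def L3 (κ₁ κ₂ k β₁ β₂ : ℝ) (x : Pt) : ℝ :=
  J01 κ₁ κ₂ x * J13 κ₂ x + J02 κ₁ κ₂ x * J23 x + k * κ₂ * Sk κ₂ (x 1) * Real.sin (x 2)
    - (2 * κ₂ * Real.sin (x 2) / Tk κ₁ (x 0)) *
        (β₁ * Sk κ₂ (x 1) / Ck κ₂ (x 1) ^ 2 + β₂ / (Sk κ₂ (x 1) * Real.cos (x 2) ^ 2))


lemma Ck_zero (x : ℝ) : Ck 0 x = 1 := by
  unfold Ck
  rw [tsum_eq_single 0]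
  · simp
  · intro b hb; simp [zero_pow hb]

lemma Sk_zero (x : ℝ) : Sk 0 x = x := by
  unfold Sk
  rw [tsum_eq_single 0]
  · simp
  · intro b hb; simp [zero_pow hb]

lemma Ck_of_pos {κ : ℝ} (h : 0 < κ) (x : ℝ) : Ck κ x = Real.cos (Real.sqrt κ * x) := by
  rw [Real.cos_eq_tsum]
  unfold Ck
  refine tsum_congr fun l => ?_
  have h1 : (Real.sqrt κ * x) ^ (2 * l) = κ ^ l * x ^ (2 * l) := by
    rw [mul_pow, pow_mul, Real.sq_sqrt h.le]
  rw [h1, neg_pow]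
  ring

lemma Sk_of_pos {κ : ℝ} (h : 0 < κ) (x : ℝ) :
    Sk κ x = Real.sin (Real.sqrt κ * x) / Real.sqrt κ := by
  rw [Real.sin_eq_tsum]
  unfold Sk
  rw [← tsum_div_const]
  refine tsum_congr fun l => ?_
  have hs : (0:ℝ) < Real.sqrt κ := Real.sqrt_pos.2 h
  have h1 : (Real.sqrt κ * x) ^ (2 * l + 1) =
      κ ^ l * Real.sqrt κ * x ^ (2 * l + 1) := by
    rw [mul_pow, pow_succ, pow_mul, Real.sq_sqrt h.le]
  rw [h1, neg_pow]
  field_simp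

lemma Ck_of_neg {κ : ℝ} (h : κ < 0) (x : ℝ) : Ck κ x = Real.cosh (Real.sqrt (-κ) * x) := by
  rw [Real.cosh_eq_tsum]
  unfold Ck
  refine tsum_congr fun l => ?_
  have h1 : (Real.sqrt (-κ) * x) ^ (2 * l) = (-κ) ^ l * x ^ (2 * l) := by
    rw [mul_pow, pow_mul, Real.sq_sqrt (by linarith)]
  rw [h1]

lemma Sk_of_neg {κ : ℝ} (h : κ < 0) (x : ℝ) :
    Sk κ x = Real.sinh (Real.sqrt (-κ) * x) / Real.sqrt (-κ) := by
  rw [Real.sinh_eq_tsum]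
  unfold Sk
  rw [← tsum_div_const]
  refine tsum_congr fun l => ?_
  have hs : (0:ℝ) < Real.sqrt (-κ) := Real.sqrt_pos.2 (by linarith)
  have h1 : (Real.sqrt (-κ) * x) ^ (2 * l + 1) =
      (-κ) ^ l * Real.sqrt (-κ) * x ^ (2 * l + 1) := by
    rw [mul_pow, pow_succ, pow_mul, Real.sq_sqrt (by linarith)]
  rw [h1]
  field_simp

lemma hasDerivAt_Sk (κ x : ℝ) : HasDerivAt (Sk κ) (Ck κ x) x := by
  rcases lt_trichotomy κ 0 with h | h | h
  · have hs : (0:ℝ) < Real.sqrt (-κ) := Real.sqrt_pos.2 (by linarith)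
    have : HasDerivAt (fun y => Real.sinh (Real.sqrt (-κ) * y) / Real.sqrt (-κ))
        (Real.cosh (Real.sqrt (-κ) * x)) x := by
      have h2 : HasDerivAt (fun y : ℝ => Real.sqrt (-κ) * y) (Real.sqrt (-κ)) x := by
        simpa using (hasDerivAt_id x).const_mul (Real.sqrt (-κ))
      have h3 := (Real.hasDerivAt_sinh (Real.sqrt (-κ) * x)).comp x h2
      have h4 := h3.div_const (Real.sqrt (-κ))
      refine h4.congr_deriv (Eq.symm ?_)
      field_simp
    exact (this.congr_of_eventuallyEq (Filter.Eventually.of_forall fun y => Sk_of_neg h y)).congr_deriv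
      (by rw [Ck_of_neg h])
  · subst h
    have : HasDerivAt (fun y : ℝ => y) (1:ℝ) x := hasDerivAt_id x
    exact (this.congr_of_eventuallyEq (Filter.Eventually.of_forall fun y => Sk_zero y)).congr_deriv
      (by rw [Ck_zero])
  · have hs : (0:ℝ) < Real.sqrt κ := Real.sqrt_pos.2 h
    have : HasDerivAt (fun y => Real.sin (Real.sqrt κ * y) / Real.sqrt κ)
        (Real.cos (Real.sqrt κ * x)) x := by
      have h2 : HasDerivAt (fun y : ℝ => Real.sqrt κ * y) (Real.sqrt κ) x := by
        simpa using (hasDerivAt_id x).const_mul (Real.sqrt κ)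
      have h3 := (Real.hasDerivAt_sin (Real.sqrt κ * x)).comp x h2
      have h4 := h3.div_const (Real.sqrt κ)
      refine h4.congr_deriv (Eq.symm ?_)
      field_simp
    exact (this.congr_of_eventuallyEq (Filter.Eventually.of_forall fun y => Sk_of_pos h y)).congr_deriv
      (by rw [Ck_of_pos h])

lemma hasDerivAt_Ck (κ x : ℝ) : HasDerivAt (Ck κ) (-(κ * Sk κ x)) x := by
  rcases lt_trichotomy κ 0 with h | h | h
  · have hs : (0:ℝ) < Real.sqrt (-κ) := Real.sqrt_pos.2 (by linarith)
    have : HasDerivAt (fun y => Real.cosh (Real.sqrt (-κ) * y))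
        (-(κ * (Real.sinh (Real.sqrt (-κ) * x) / Real.sqrt (-κ)))) x := by
      have h2 : HasDerivAt (fun y : ℝ => Real.sqrt (-κ) * y) (Real.sqrt (-κ)) x := by
        simpa using (hasDerivAt_id x).const_mul (Real.sqrt (-κ))
      have h3 := (Real.hasDerivAt_cosh (Real.sqrt (-κ) * x)).comp x h2
      refine h3.congr_deriv (Eq.symm ?_)
      have : Real.sqrt (-κ) * Real.sqrt (-κ) = -κ := Real.mul_self_sqrt (by linarith)
      field_simp
      linear_combination (-Real.sinh (Real.sqrt (-κ) * x)) * this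
    exact (this.congr_of_eventuallyEq (Filter.Eventually.of_forall fun y => Ck_of_neg h y)).congr_deriv
      (by rw [Sk_of_neg h])
  · subst h
    have : HasDerivAt (fun _ : ℝ => (1:ℝ)) (0:ℝ) x := hasDerivAt_const x 1
    exact (this.congr_of_eventuallyEq (Filter.Eventually.of_forall fun y => Ck_zero y)).congr_deriv
      (by simp)
  · have hs : (0:ℝ) < Real.sqrt κ := Real.sqrt_pos.2 h
    have : HasDerivAt (fun y => Real.cos (Real.sqrt κ * y))
        (-(κ * (Real.sin (Real.sqrt κ * x) / Real.sqrt κ))) x := by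
      have h2 : HasDerivAt (fun y : ℝ => Real.sqrt κ * y) (Real.sqrt κ) x := by
        simpa using (hasDerivAt_id x).const_mul (Real.sqrt κ)
      have h3 := (Real.hasDerivAt_cos (Real.sqrt κ * x)).comp x h2
      refine h3.congr_deriv (Eq.symm ?_)
      have : Real.sqrt κ * Real.sqrt κ = κ := Real.mul_self_sqrt h.le
      field_simp
      linear_combination (Real.sin (Real.sqrt κ * x)) * this
    exact (this.congr_of_eventuallyEq (Filter.Eventually.of_forall fun y => Ck_of_pos h y)).congr_deriv
      (by rw [Sk_of_pos h])

lemma Ck_sq_add (κ x : ℝ) : Ck κ x ^ 2 + κ * Sk κ x ^ 2 = 1 := by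
  rcases lt_trichotomy κ 0 with h | h | h
  · have hs : (0:ℝ) < Real.sqrt (-κ) := Real.sqrt_pos.2 (by linarith)
    rw [Ck_of_neg h, Sk_of_neg h]
    have h1 : Real.sqrt (-κ) ^ 2 = -κ := Real.sq_sqrt (by linarith)
    have h2 := Real.cosh_sq_sub_sinh_sq (Real.sqrt (-κ) * x)
    rw [div_pow, h1]
    have h3 : κ * (Real.sinh (Real.sqrt (-κ) * x) ^ 2 / -κ) = -Real.sinh (Real.sqrt (-κ) * x) ^ 2 := by
      have hk : κ ≠ 0 := ne_of_lt h
      rw [div_neg, mul_neg, mul_comm, div_mul_cancel₀ _ hk]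
    rw [h3]
    linear_combination h2
  · subst h; rw [Ck_zero]; simp
  · have hs : (0:ℝ) < Real.sqrt κ := Real.sqrt_pos.2 h
    rw [Ck_of_pos h, Sk_of_pos h]
    have h1 : Real.sqrt κ ^ 2 = κ := Real.sq_sqrt h.le
    have h2 := Real.sin_sq_add_cos_sq (Real.sqrt κ * x)
    rw [div_pow, h1]
    have h3 : κ * (Real.sin (Real.sqrt κ * x) ^ 2 / κ) = Real.sin (Real.sqrt κ * x) ^ 2 := by
      have hk : κ ≠ 0 := ne_of_gt h
      rw [mul_comm, div_mul_cancel₀ _ hk]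
    rw [h3]
    linear_combination h2

def mlin (v : Fin 6 → ℝ) : Pt →L[ℝ] ℝ :=
  ∑ i : Fin 6, v i • (ContinuousLinearMap.proj i : Pt →L[ℝ] ℝ)

lemma mlin_apply (v : Fin 6 → ℝ) (u : Pt) : mlin v u = ∑ i : Fin 6, v i * u i := by
  simp [mlin]

lemma mlin_add (v w : Fin 6 → ℝ) : mlin v + mlin w = mlin (v + w) := by
  ext u
  simp [mlin_apply, add_mul, Finset.sum_add_distrib]

lemma mlin_single (v : Fin 6 → ℝ) (i : Fin 6) : mlin v (Pi.single i 1) = v i := by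
  rw [mlin_apply]
  rw [Finset.sum_eq_single i]
  · simp
  · intro b _ hb; simp [Pi.single_apply, hb.symm]
  · simp

@[simp] lemma vec6_five (v0 v1 v2 v3 v4 v5 : ℝ) : ![v0,v1,v2,v3,v4,v5] 5 = v5 := rfl
@[simp] lemma vec6_four (v0 v1 v2 v3 v4 v5 : ℝ) : ![v0,v1,v2,v3,v4,v5] 4 = v4 := rfl
@[simp] lemma vec6_three (v0 v1 v2 v3 v4 v5 : ℝ) : ![v0,v1,v2,v3,v4,v5] 3 = v3 := rfl
@[simp] lemma vec6_two (v0 v1 v2 v3 v4 v5 : ℝ) : ![v0,v1,v2,v3,v4,v5] 2 = v2 := rfl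
@[simp] lemma vec6_one (v0 v1 v2 v3 v4 v5 : ℝ) : ![v0,v1,v2,v3,v4,v5] 1 = v1 := rfl
@[simp] lemma vec6_zero (v0 v1 v2 v3 v4 v5 : ℝ) : ![v0,v1,v2,v3,v4,v5] 0 = v0 := rfl

lemma pd_eq {f : Pt → ℝ} {L : Pt →L[ℝ] ℝ} {x : Pt} (h : HasFDerivAt f L x) (i : Fin 6) :
    pd f i x = L (Pi.single i 1) := by
  rw [pd, h.fderiv]

lemma hasFDerivAt_coord (i : Fin 6) (x : Pt) :
    HasFDerivAt (fun p : Pt => p i) (ContinuousLinearMap.proj i : Pt →L[ℝ] ℝ) x :=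
  (ContinuousLinearMap.proj i : Pt →L[ℝ] ℝ).hasFDerivAt

lemma hasFDerivAt_mono6 {a b c d e f : ℝ → ℝ} {a' b' c' d' e' f' : ℝ} (x : Pt)
    (ha : HasDerivAt a a' (x 0)) (hb : HasDerivAt b b' (x 1)) (hc : HasDerivAt c c' (x 2))
    (hd : HasDerivAt d d' (x 3)) (he : HasDerivAt e e' (x 4)) (hf : HasDerivAt f f' (x 5)) :
    HasFDerivAt (fun p : Pt => a (p 0) * b (p 1) * c (p 2) * d (p 3) * e (p 4) * f (p 5))
      (mlin ![a' * b (x 1) * c (x 2) * d (x 3) * e (x 4) * f (x 5),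
              a (x 0) * b' * c (x 2) * d (x 3) * e (x 4) * f (x 5),
              a (x 0) * b (x 1) * c' * d (x 3) * e (x 4) * f (x 5),
              a (x 0) * b (x 1) * c (x 2) * d' * e (x 4) * f (x 5),
              a (x 0) * b (x 1) * c (x 2) * d (x 3) * e' * f (x 5),
              a (x 0) * b (x 1) * c (x 2) * d (x 3) * e (x 4) * f']) x := by
  have h0 := ha.comp_hasFDerivAt x (hasFDerivAt_coord 0 x)
  have h1 := hb.comp_hasFDerivAt x (hasFDerivAt_coord 1 x)
  have h2 := hc.comp_hasFDerivAt x (hasFDerivAt_coord 2 x)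
  have h3 := hd.comp_hasFDerivAt x (hasFDerivAt_coord 3 x)
  have h4 := he.comp_hasFDerivAt x (hasFDerivAt_coord 4 x)
  have h5 := hf.comp_hasFDerivAt x (hasFDerivAt_coord 5 x)
  have hbig := ((((h0.mul h1).mul h2).mul h3).mul h4).mul h5
  exact hbig.congr_fderiv (by
    ext u
    simp [mlin_apply, Fin.sum_univ_six, Function.comp]
    ring)

lemma Ck_one (x : ℝ) : Ck 1 x = Real.cos x := by simpa using Ck_of_pos one_pos x
lemma Sk_one (x : ℝ) : Sk 1 x = Real.sin x := by simpa using Sk_of_pos one_pos x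

lemma hasDerivAt_Sinv2 {κ θ : ℝ} (hs : Sk κ θ ≠ 0) :
    HasDerivAt (fun t => ((Sk κ t)⁻¹) ^ 2) (-2 * Ck κ θ * ((Sk κ θ) ^ 3)⁻¹) θ := by
  have h := ((hasDerivAt_Sk κ θ).inv hs).pow 2
  refine h.congr_deriv (Eq.symm ?_)
  rw [show ((Sk κ θ)^3)⁻¹ = (Sk κ θ)⁻¹ * ((Sk κ θ)^2)⁻¹ by rw [← mul_inv]; ring_nf]
  norm_num
  ring

lemma hasDerivAt_Cinv2 {κ θ : ℝ} (hc : Ck κ θ ≠ 0) :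
    HasDerivAt (fun t => ((Ck κ t)⁻¹) ^ 2) (2 * κ * Sk κ θ * ((Ck κ θ) ^ 3)⁻¹) θ := by
  have h := ((hasDerivAt_Ck κ θ).inv hc).pow 2
  refine h.congr_deriv (Eq.symm ?_)
  rw [show ((Ck κ θ)^3)⁻¹ = (Ck κ θ)⁻¹ * ((Ck κ θ)^2)⁻¹ by rw [← mul_inv]; ring_nf]
  norm_num
  ring

lemma hasDerivAt_CS_inv {κ θ : ℝ} (hs : Sk κ θ ≠ 0) :
    HasDerivAt (fun t => Ck κ t * (Sk κ t)⁻¹) (-((Sk κ θ) ^ 2)⁻¹) θ := by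
  have h := (hasDerivAt_Ck κ θ).mul ((hasDerivAt_Sk κ θ).inv hs)
  refine h.congr_deriv (Eq.symm ?_)
  have hpy := Ck_sq_add κ θ
  simp only [Pi.inv_apply, Pi.pow_apply]
  field_simp
  linear_combination hpy

lemma hasDerivAt_C2S2 {κ θ : ℝ} (hs : Sk κ θ ≠ 0) :
    HasDerivAt (fun t => Ck κ t ^ 2 * ((Sk κ t)⁻¹) ^ 2) (-2 * Ck κ θ * ((Sk κ θ) ^ 3)⁻¹) θ := by
  have h := ((hasDerivAt_Ck κ θ).pow 2).mul (hasDerivAt_Sinv2 hs)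
  refine h.congr_deriv (Eq.symm ?_)
  have hpy := Ck_sq_add κ θ
  simp only [Pi.inv_apply, Pi.pow_apply]
  field_simp
  linear_combination (2 * Ck κ θ) * hpy

lemma hasDerivAt_S2C2 {κ θ : ℝ} (hc : Ck κ θ ≠ 0) :
    HasDerivAt (fun t => Sk κ t ^ 2 * ((Ck κ t)⁻¹) ^ 2) (2 * Sk κ θ * ((Ck κ θ) ^ 3)⁻¹) θ := by
  have h := ((hasDerivAt_Sk κ θ).pow 2).mul (hasDerivAt_Cinv2 hc)
  refine h.congr_deriv (Eq.symm ?_)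
  have hpy := Ck_sq_add κ θ
  simp only [Pi.inv_apply, Pi.pow_apply]
  field_simp
  linear_combination (-2 * Sk κ θ) * hpy

lemma hasDerivAt_cosinv2 {θ : ℝ} (hc : Real.cos θ ≠ 0) :
    HasDerivAt (fun t => ((Real.cos t)⁻¹) ^ 2) (2 * Real.sin θ * ((Real.cos θ) ^ 3)⁻¹) θ := by
  have h := hasDerivAt_Cinv2 (κ := 1) (θ := θ) (by simpa [Ck_one] using hc)
  simp only [Ck_one, Sk_one] at h
  simpa using h

lemma hasDerivAt_sininv2 {θ : ℝ} (hs : Real.sin θ ≠ 0) :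
    HasDerivAt (fun t => ((Real.sin t)⁻¹) ^ 2) (-2 * Real.cos θ * ((Real.sin θ) ^ 3)⁻¹) θ := by
  have h := hasDerivAt_Sinv2 (κ := 1) (θ := θ) (by simpa [Sk_one] using hs)
  simp only [Ck_one, Sk_one] at h
  exact h

lemma hasDerivAt_tan2 {θ : ℝ} (hc : Real.cos θ ≠ 0) :
    HasDerivAt (fun t => Real.sin t ^ 2 * ((Real.cos t)⁻¹) ^ 2)
      (2 * Real.sin θ * ((Real.cos θ) ^ 3)⁻¹) θ := by
  have h := hasDerivAt_S2C2 (κ := 1) (θ := θ) (by simpa [Ck_one] using hc)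
  simp only [Ck_one, Sk_one] at h
  exact h

lemma hasDerivAt_cot2 {θ : ℝ} (hs : Real.sin θ ≠ 0) :
    HasDerivAt (fun t => Real.cos t ^ 2 * ((Real.sin t)⁻¹) ^ 2)
      (-2 * Real.cos θ * ((Real.sin θ) ^ 3)⁻¹) θ := by
  have h := hasDerivAt_C2S2 (κ := 1) (θ := θ) (by simpa [Sk_one] using hs)
  simp only [Ck_one, Sk_one] at h
  exact h

lemma hasDerivAt_cos2 (θ : ℝ) :
    HasDerivAt (fun t => Real.cos t ^ 2) (-2 * Real.sin θ * Real.cos θ) θ := by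
  have h := (Real.hasDerivAt_cos θ).pow 2
  refine h.congr_deriv (Eq.symm ?_)
  ring

lemma hasDerivAt_sin2 (θ : ℝ) :
    HasDerivAt (fun t => Real.sin t ^ 2) (2 * Real.sin θ * Real.cos θ) θ := by
  have h := (Real.hasDerivAt_sin θ).pow 2
  refine h.congr_deriv (Eq.symm ?_)
  ring

lemma hasDerivAt_cossin (θ : ℝ) :
    HasDerivAt (fun t => Real.cos t * Real.sin t) (Real.cos θ ^ 2 - Real.sin θ ^ 2) θ := by
  have h := (Real.hasDerivAt_cos θ).mul (Real.hasDerivAt_sin θ)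
  refine h.congr_deriv (Eq.symm ?_)
  ring

lemma hasDerivAt_sq (t : ℝ) : HasDerivAt (fun s : ℝ => s ^ 2) (2 * t) t := by
  exact ((hasDerivAt_id t).pow 2).congr_deriv (by simp)

lemma continuous_Sk (κ : ℝ) : Continuous (Sk κ) :=
  continuous_iff_continuousAt.2 fun x => (hasDerivAt_Sk κ x).continuousAt

lemma continuous_Ck (κ : ℝ) : Continuous (Ck κ) :=
  continuous_iff_continuousAt.2 fun x => (hasDerivAt_Ck κ x).continuousAt

lemma pb_expand (f g : Pt → ℝ) (x : Pt) :
    pb f g x =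
      (pd f 0 x * pd g 3 x - pd g 0 x * pd f 3 x)
      + (pd f 1 x * pd g 4 x - pd g 1 x * pd f 4 x)
      + (pd f 2 x * pd g 5 x - pd g 2 x * pd f 5 x) := by
  rw [pb, Fin.sum_univ_three]
  rfl


set_option maxHeartbeats 8000000 in
/-- {I₁₂, I₁₂₃, H} are mutually in involution on D, and so are
{I₂₃, I₁₂₃, H}, for H = T + U with any smooth F and constants β₁, β₂, β₃. -/
theorem involution_triples (κ₁ κ₂ : ℝ) (hκ₂ : κ₂ ≠ 0)
    (F : ℝ → ℝ) (hF : ContDiff ℝ (⊤ : ℕ∞) F) (β₁ β₂ β₃ : ℝ) :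
    ∀ x ∈ D κ₁ κ₂,
      (pb (I12 κ₂ β₁ β₂) (I123 κ₂ β₁ β₂ β₃) x = 0 ∧
       pb (I12 κ₂ β₁ β₂) (fun y => Tkin κ₁ κ₂ y + U κ₁ κ₂ F β₁ β₂ β₃ y) x = 0 ∧
       pb (I123 κ₂ β₁ β₂ β₃) (fun y => Tkin κ₁ κ₂ y + U κ₁ κ₂ F β₁ β₂ β₃ y) x = 0) ∧
      (pb (I23 κ₂ β₂ β₃) (I123 κ₂ β₁ β₂ β₃) x = 0 ∧
       pb (I23 κ₂ β₂ β₃) (fun y => Tkin κ₁ κ₂ y + U κ₁ κ₂ F β₁ β₂ β₃ y) x = 0 ∧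
       pb (I123 κ₂ β₁ β₂ β₃) (fun y => Tkin κ₁ κ₂ y + U κ₁ κ₂ F β₁ β₂ β₃ y) x = 0) := by
  intro x hx
  obtain ⟨h1s, h1c, h2s, h2c, hco, hsi⟩ := hx
  have cS1 : Continuous fun p : Pt => Sk κ₁ (p 0) := (continuous_Sk κ₁).comp (continuous_apply 0)
  have cS2 : Continuous fun p : Pt => Sk κ₂ (p 1) := (continuous_Sk κ₂).comp (continuous_apply 1)
  have cC2 : Continuous fun p : Pt => Ck κ₂ (p 1) := (continuous_Ck κ₂).comp (continuous_apply 1)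
  have cco : Continuous fun p : Pt => Real.cos (p 2) := Real.continuous_cos.comp (continuous_apply 2)
  have csi : Continuous fun p : Pt => Real.sin (p 2) := Real.continuous_sin.comp (continuous_apply 2)
  have o1 : IsOpen {p : Pt | Sk κ₁ (p 0) ≠ 0} := IsOpen.preimage cS1 isOpen_compl_singleton
  have o2 : IsOpen {p : Pt | Sk κ₂ (p 1) ≠ 0} := IsOpen.preimage cS2 isOpen_compl_singleton
  have o3 : IsOpen {p : Pt | Ck κ₂ (p 1) ≠ 0} := IsOpen.preimage cC2 isOpen_compl_singleton
  have o4 : IsOpen {p : Pt | Real.cos (p 2) ≠ 0} := IsOpen.preimage cco isOpen_compl_singleton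
  have o5 : IsOpen {p : Pt | Real.sin (p 2) ≠ 0} := IsOpen.preimage csi isOpen_compl_singleton
  have hSopen : IsOpen {p : Pt | Sk κ₁ (p 0) ≠ 0 ∧ Sk κ₂ (p 1) ≠ 0 ∧ Ck κ₂ (p 1) ≠ 0 ∧
      Real.cos (p 2) ≠ 0 ∧ Real.sin (p 2) ≠ 0} := by
    have hset : {p : Pt | Sk κ₁ (p 0) ≠ 0 ∧ Sk κ₂ (p 1) ≠ 0 ∧ Ck κ₂ (p 1) ≠ 0 ∧
        Real.cos (p 2) ≠ 0 ∧ Real.sin (p 2) ≠ 0} =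
        {p : Pt | Sk κ₁ (p 0) ≠ 0} ∩ ({p : Pt | Sk κ₂ (p 1) ≠ 0} ∩ ({p : Pt | Ck κ₂ (p 1) ≠ 0} ∩
        ({p : Pt | Real.cos (p 2) ≠ 0} ∩ {p : Pt | Real.sin (p 2) ≠ 0}))) := rfl
    rw [hset]
    exact o1.inter (o2.inter (o3.inter (o4.inter o5)))
  have hmem : {p : Pt | Sk κ₁ (p 0) ≠ 0 ∧ Sk κ₂ (p 1) ≠ 0 ∧ Ck κ₂ (p 1) ≠ 0 ∧
      Real.cos (p 2) ≠ 0 ∧ Real.sin (p 2) ≠ 0} ∈ nhds x :=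
    hSopen.mem_nhds ⟨h1s, h2s, h2c, hco, hsi⟩
  -- one-variable derivative facts
  have dF : HasDerivAt F (deriv F (x 0)) (x 0) := ((hF.differentiable (by simp)) (x 0)).hasDerivAt
  have d1Sinv2 := hasDerivAt_Sinv2 (κ := κ₁) (θ := x 0) h1s
  have d2CS := hasDerivAt_CS_inv (κ := κ₂) (θ := x 1) h2s
  have d2C2S2 := hasDerivAt_C2S2 (κ := κ₂) (θ := x 1) h2s
  have d2S2C2 := hasDerivAt_S2C2 (κ := κ₂) (θ := x 1) h2c
  have d2Sinv2 := hasDerivAt_Sinv2 (κ := κ₂) (θ := x 1) h2s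
  have d2Cinv2 := hasDerivAt_Cinv2 (κ := κ₂) (θ := x 1) h2c
  have dcos2 := hasDerivAt_cos2 (x 2)
  have dsin2 := hasDerivAt_sin2 (x 2)
  have dcossin := hasDerivAt_cossin (x 2)
  have dcosi := hasDerivAt_cosinv2 hco
  have dsini := hasDerivAt_sininv2 hsi
  have dtan2 := hasDerivAt_tan2 hco
  have dcot2 := hasDerivAt_cot2 hsi
  have dsq3 := hasDerivAt_sq (x 3)
  have dsq4 := hasDerivAt_sq (x 4)
  have dsq5 := hasDerivAt_sq (x 5)
  have did4 := hasDerivAt_id' (x 4)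
  have did5 := hasDerivAt_id' (x 5)
  have K : ∀ (t c : ℝ), HasDerivAt (fun _ : ℝ => c) 0 t := fun t c => hasDerivAt_const t c
  -- I12
  have hm1 := hasFDerivAt_mono6 x (K (x 0) 1) (K (x 1) 1) dcos2 (K (x 3) 1) dsq4 (K (x 5) 1)
  have hm2 := hasFDerivAt_mono6 x (K (x 0) (-2)) d2CS dcossin (K (x 3) 1) did4 did5
  have hm3 := hasFDerivAt_mono6 x (K (x 0) 1) d2C2S2 dsin2 (K (x 3) 1) (K (x 4) 1) dsq5
  have hm4 := hasFDerivAt_mono6 x (K (x 0) (2*β₁*κ₂^2)) d2S2C2 dcos2 (K (x 3) 1) (K (x 4) 1) (K (x 5) 1)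
  have hm5 := hasFDerivAt_mono6 x (K (x 0) (2*β₂*κ₂)) d2C2S2 dcosi (K (x 3) 1) (K (x 4) 1) (K (x 5) 1)
  have hG12 := (((hm1.add hm2).add hm3).add hm4).add hm5
  rw [mlin_add, mlin_add, mlin_add, mlin_add] at hG12
  have h12 : HasFDerivAt (I12 κ₂ β₁ β₂) _ x :=
    hG12.congr_of_eventuallyEq (Filter.eventuallyEq_of_mem hmem (fun p hp => by
      obtain ⟨q1, q2, q3, q4, q5⟩ := hp
      show I12 κ₂ β₁ β₂ p = _
      simp only [Pi.add_apply]
      unfold I12 Tk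
      field_simp
      ring))
  -- I123
  have hn1 := hasFDerivAt_mono6 x (K (x 0) 1) (K (x 1) 1) (K (x 2) 1) (K (x 3) 1) dsq4 (K (x 5) 1)
  have hn2 := hasFDerivAt_mono6 x (K (x 0) 1) d2Sinv2 (K (x 2) 1) (K (x 3) 1) (K (x 4) 1) dsq5
  have hn3 := hasFDerivAt_mono6 x (K (x 0) (2*β₁*κ₂)) d2Cinv2 (K (x 2) 1) (K (x 3) 1) (K (x 4) 1) (K (x 5) 1)
  have hn4 := hasFDerivAt_mono6 x (K (x 0) (2*β₂*κ₂)) d2Sinv2 dcosi (K (x 3) 1) (K (x 4) 1) (K (x 5) 1)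
  have hn5 := hasFDerivAt_mono6 x (K (x 0) (2*β₃*κ₂)) d2Sinv2 dsini (K (x 3) 1) (K (x 4) 1) (K (x 5) 1)
  have hG123 := (((hn1.add hn2).add hn3).add hn4).add hn5
  rw [mlin_add, mlin_add, mlin_add, mlin_add] at hG123
  have h123 : HasFDerivAt (I123 κ₂ β₁ β₂ β₃) _ x :=
    hG123.congr_of_eventuallyEq (Filter.eventuallyEq_of_mem hmem (fun p hp => by
      obtain ⟨q1, q2, q3, q4, q5⟩ := hp
      show I123 κ₂ β₁ β₂ β₃ p = _
      simp only [Pi.add_apply]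
      unfold I123
      field_simp))
  -- I23
  have hk1 := hasFDerivAt_mono6 x (K (x 0) 1) (K (x 1) 1) (K (x 2) 1) (K (x 3) 1) (K (x 4) 1) dsq5
  have hk2 := hasFDerivAt_mono6 x (K (x 0) (2*β₂*κ₂)) (K (x 1) 1) dtan2 (K (x 3) 1) (K (x 4) 1) (K (x 5) 1)
  have hk3 := hasFDerivAt_mono6 x (K (x 0) (2*β₃*κ₂)) (K (x 1) 1) dcot2 (K (x 3) 1) (K (x 4) 1) (K (x 5) 1)
  have hG23 := (hk1.add hk2).add hk3
  rw [mlin_add, mlin_add] at hG23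
  have h23 : HasFDerivAt (I23 κ₂ β₂ β₃) _ x :=
    hG23.congr_of_eventuallyEq (Filter.eventuallyEq_of_mem hmem (fun p hp => by
      obtain ⟨q1, q2, q3, q4, q5⟩ := hp
      show I23 κ₂ β₂ β₃ p = _
      simp only [Pi.add_apply]
      unfold I23
      rw [Real.tan_eq_sin_div_cos]
      field_simp))
  -- H = Tkin + U
  have hq1 := hasFDerivAt_mono6 x (K (x 0) (1/2)) (K (x 1) 1) (K (x 2) 1) dsq3 (K (x 4) 1) (K (x 5) 1)
  have hq2 := hasFDerivAt_mono6 x (d1Sinv2.const_mul ((2*κ₂)⁻¹)) (K (x 1) 1) (K (x 2) 1) (K (x 3) 1) dsq4 (K (x 5) 1)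
  have hq3 := hasFDerivAt_mono6 x (d1Sinv2.const_mul ((2*κ₂)⁻¹)) d2Sinv2 (K (x 2) 1) (K (x 3) 1) (K (x 4) 1) dsq5
  have hq4 := hasFDerivAt_mono6 x dF (K (x 1) 1) (K (x 2) 1) (K (x 3) 1) (K (x 4) 1) (K (x 5) 1)
  have hq5 := hasFDerivAt_mono6 x (d1Sinv2.const_mul β₁) d2Cinv2 (K (x 2) 1) (K (x 3) 1) (K (x 4) 1) (K (x 5) 1)
  have hq6 := hasFDerivAt_mono6 x (d1Sinv2.const_mul β₂) d2Sinv2 dcosi (K (x 3) 1) (K (x 4) 1) (K (x 5) 1)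
  have hq7 := hasFDerivAt_mono6 x (d1Sinv2.const_mul β₃) d2Sinv2 dsini (K (x 3) 1) (K (x 4) 1) (K (x 5) 1)
  have hGH := (((((hq1.add hq2).add hq3).add hq4).add hq5).add hq6).add hq7
  rw [mlin_add, mlin_add, mlin_add, mlin_add, mlin_add, mlin_add] at hGH
  have hH : HasFDerivAt (fun y => Tkin κ₁ κ₂ y + U κ₁ κ₂ F β₁ β₂ β₃ y) _ x :=
    hGH.congr_of_eventuallyEq (Filter.eventuallyEq_of_mem hmem (fun p hp => by
      obtain ⟨q1, q2, q3, q4, q5⟩ := hp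
      show Tkin κ₁ κ₂ p + U κ₁ κ₂ F β₁ β₂ β₃ p = _
      simp only [Pi.add_apply]
      unfold Tkin U
      field_simp
      ring))
  have hpy := Ck_sq_add κ₂ (x 1)
  have hsc := Real.sin_sq_add_cos_sq (x 2)
  have B1 : pb (I12 κ₂ β₁ β₂) (I123 κ₂ β₁ β₂ β₃) x = 0 := by
    rw [pb_expand]
    simp only [pd_eq h12, pd_eq h123, mlin_single, Pi.add_apply,
      vec6_zero, vec6_one, vec6_two, vec6_three, vec6_four, vec6_five]
    field_simp
    linear_combination ((8)*Ck κ₂ (x 1)^6*Sk κ₂ (x 1)^2*β₂*Real.cos (x 2)^3*κ₂*Real.sin (x 2)^3*x 4 + (-8)*Ck κ₂ (x 1)^7*Sk κ₂ (x 1)*β₂*Real.cos (x 2)^2*κ₂*Real.sin (x 2)^4*x 5) * hsc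
  have B2 : pb (I12 κ₂ β₁ β₂) (fun y => Tkin κ₁ κ₂ y + U κ₁ κ₂ F β₁ β₂ β₃ y) x = 0 := by
    rw [pb_expand]
    simp only [pd_eq h12, pd_eq hH, mlin_single, Pi.add_apply,
      vec6_zero, vec6_one, vec6_two, vec6_three, vec6_four, vec6_five]
    field_simp
    linear_combination ((8)*Ck κ₂ (x 1)^6*Sk κ₁ (x 0)*Sk κ₂ (x 1)^2*β₂*Real.cos (x 2)^3*κ₂*Real.sin (x 2)^3*x 4 + (-8)*Ck κ₂ (x 1)^7*Sk κ₁ (x 0)*Sk κ₂ (x 1)*β₂*Real.cos (x 2)^2*κ₂*Real.sin (x 2)^4*x 5) * hsc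
  have B3 : pb (I123 κ₂ β₁ β₂ β₃) (fun y => Tkin κ₁ κ₂ y + U κ₁ κ₂ F β₁ β₂ β₃ y) x = 0 := by
    rw [pb_expand]
    simp only [pd_eq h123, pd_eq hH, mlin_single, Pi.add_apply,
      vec6_zero, vec6_one, vec6_two, vec6_three, vec6_four, vec6_five]
    field_simp
    ring
  have B4 : pb (I23 κ₂ β₂ β₃) (I123 κ₂ β₁ β₂ β₃) x = 0 := by
    rw [pb_expand]
    simp only [pd_eq h23, pd_eq h123, mlin_single, Pi.add_apply,
      vec6_zero, vec6_one, vec6_two, vec6_three, vec6_four, vec6_five]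
    field_simp
    ring
  have B5 : pb (I23 κ₂ β₂ β₃) (fun y => Tkin κ₁ κ₂ y + U κ₁ κ₂ F β₁ β₂ β₃ y) x = 0 := by
    rw [pb_expand]
    simp only [pd_eq h23, pd_eq hH, mlin_single, Pi.add_apply,
      vec6_zero, vec6_one, vec6_two, vec6_three, vec6_four, vec6_five]
    field_simp
    ring
  exact ⟨⟨B1, B2, B3⟩, ⟨B4, B5, B3⟩⟩

end
end Paper
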